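/- Let σ : ℝ → ℝ be differentiable with K-Lipschitz derivative σ' and 0 < σ_0 ≤ σ(u) ≤ σ_1, let ε > 0, let F(x) = ∫_0^x 1/(ε σ(u)) du, and let f : ℝ → ℝ be such that f/σ is L-Lipschitz. Then the function b(x) := f(F⁻¹(x))/(ε σ(F⁻¹(x))) − ε σ'(F⁻¹(x))/2 is Lipschitz with constant (L/ε + Kε/2) σ_1 ε = (L + Kε²/2) σ_1. -/
import Mathlib


open intervalIntegral

/-- With `F x = ∫_0^x du/(ε σ(u))`, `σ'` the (K-Lipschitz) derivative of `σ`,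
`σ₀ ≤ σ ≤ σ₁` and `f/σ` `L`-Lipschitz, the function
`b x = f(F⁻¹ x)/(ε σ(F⁻¹ x)) − ε σ'(F⁻¹ x)/2` is `(L/ε + Kε/2) σ₁ ε`-Lipschitz. -/
theorem stmt8 (K L σ₀ σ₁ ε : ℝ) (hK : 0 < K) (hL : 0 < L) (h0 : 0 < σ₀)
    (h01 : σ₀ ≤ σ₁) (hε : 0 < ε)
    (σ σ' f : ℝ → ℝ)
    (hderiv : ∀ x : ℝ, HasDerivAt σ (σ' x) x)
    (hσb : ∀ u : ℝ, σ₀ ≤ σ u ∧ σ u ≤ σ₁)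
    (hσ'l : ∀ x y : ℝ, |σ' x - σ' y| ≤ K * |x - y|)
    (hfσ : ∀ x y : ℝ, |f x / σ x - f y / σ y| ≤ L * |x - y|) :
    ∀ x y : ℝ,
      |(f (Function.invFun (fun x : ℝ => ∫ u in (0:ℝ)..x, 1 / (ε * σ u)) x) /
          (ε * σ (Function.invFun (fun x : ℝ => ∫ u in (0:ℝ)..x, 1 / (ε * σ u)) x)) -
          ε * σ' (Function.invFun (fun x : ℝ => ∫ u in (0:ℝ)..x, 1 / (ε * σ u)) x) / 2) -
        (f (Function.invFun (fun x : ℝ => ∫ u in (0:ℝ)..x, 1 / (ε * σ u)) y) /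
          (ε * σ (Function.invFun (fun x : ℝ => ∫ u in (0:ℝ)..x, 1 / (ε * σ u)) y)) -
          ε * σ' (Function.invFun (fun x : ℝ => ∫ u in (0:ℝ)..x, 1 / (ε * σ u)) y) / 2)|
        ≤ (L / ε + K * ε / 2) * (σ₁ * ε) * |x - y| := by
  intro x y
  set F : ℝ → ℝ := fun x : ℝ => ∫ u in (0:ℝ)..x, 1 / (ε * σ u) with hFdef
  set G : ℝ → ℝ := Function.invFun F with hGdef
  have hσ1 : 0 < σ₁ := lt_of_lt_of_le h0 h01
  have hσpos : ∀ u, 0 < σ u := fun u => lt_of_lt_of_le h0 (hσb u).1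
  have hεσ1 : 0 < ε * σ₁ := mul_pos hε hσ1
  have hσcont : Continuous σ := continuous_iff_continuousAt.mpr fun t => (hderiv t).continuousAt
  have cont_g : Continuous fun u => 1 / (ε * σ u) :=
    continuous_const.div (continuous_const.mul hσcont) fun u => (mul_pos hε (hσpos u)).ne'
  have hFd : ∀ t : ℝ, HasDerivAt F (1 / (ε * σ t)) t := fun t =>
    (cont_g.integral_hasStrictDerivAt 0 t).hasDerivAt
  have hFcont : Continuous F := continuous_iff_continuousAt.mpr fun t => (hFd t).continuousAt
  have hF_sub : ∀ a b : ℝ, F a - F b = ∫ u in b..a, 1 / (ε * σ u) := fun a b =>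
    integral_interval_sub_left (cont_g.intervalIntegrable 0 a) (cont_g.intervalIntegrable 0 b)
  have hF_lb : ∀ a b : ℝ, b ≤ a → (a - b) / (ε * σ₁) ≤ F a - F b := by
    intro a b hba
    rw [hF_sub]
    have h1 : (a - b) / (ε * σ₁) = ∫ u in b..a, 1 / (ε * σ₁) := by
      rw [intervalIntegral.integral_const]
      simp [smul_eq_mul, div_eq_mul_inv, mul_comm]
    rw [h1]
    apply intervalIntegral.integral_mono_on hba
      (intervalIntegrable_const) (cont_g.intervalIntegrable b a)
    intro u _
    apply one_div_le_one_div_of_le (mul_pos hε (hσpos u))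
    exact mul_le_mul_of_nonneg_left (hσb u).2 hε.le
  have hFmono : StrictMono F := by
    intro a b hab
    have := hF_lb b a hab.le
    have h2 : 0 < (b - a) / (ε * σ₁) := div_pos (by linarith) hεσ1
    linarith
  have hF0 : F 0 = 0 := intervalIntegral.integral_same
  have hFsurj : Function.Surjective F := by
    intro z
    rcases le_total 0 z with hz | hz
    · have hle : (0 : ℝ) ≤ ε * σ₁ * z := mul_nonneg hεσ1.le hz
      have hub : z ≤ F (ε * σ₁ * z) := by
        have := hF_lb (ε * σ₁ * z) 0 hle
        rw [hF0, sub_zero, sub_zero] at this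
        have : ε * σ₁ * z / (ε * σ₁) = z := by field_simp
        have h := hF_lb (ε * σ₁ * z) 0 hle
        rw [hF0, sub_zero, sub_zero, this] at h
        exact h
      obtain ⟨w, _, hw⟩ := intermediate_value_Icc hle hFcont.continuousOn
        ⟨by rw [hF0]; exact hz, hub⟩
      exact ⟨w, hw⟩
    · have hle : ε * σ₁ * z ≤ 0 := mul_nonpos_of_nonneg_of_nonpos hεσ1.le hz
      have hlb : F (ε * σ₁ * z) ≤ z := by
        have h := hF_lb 0 (ε * σ₁ * z) hle
        rw [hF0, zero_sub, zero_sub] at h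
        have h2 : -(ε * σ₁ * z) / (ε * σ₁) = -z := by field_simp
        rw [h2] at h
        linarith
      obtain ⟨w, _, hw⟩ := intermediate_value_Icc hle hFcont.continuousOn
        ⟨hlb, by rw [hF0]; exact hz⟩
      exact ⟨w, hw⟩
  have hGr : ∀ t : ℝ, F (G t) = t := fun t => Function.rightInverse_invFun hFsurj t
  have hGlip : |G x - G y| ≤ σ₁ * ε * |x - y| := by
    have key : ∀ a b : ℝ, G b ≤ G a → G a - G b ≤ σ₁ * ε * (a - b) := by
      intro a b hba
      have h := hF_lb (G a) (G b) hba
      rw [hGr, hGr] at h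
      rw [div_le_iff₀ hεσ1] at h
      nlinarith
    rcases le_total (G y) (G x) with h | h
    · have h1 := key x y h
      have h2 : x - y ≤ |x - y| := le_abs_self _
      rw [abs_of_nonneg (by linarith : (0:ℝ) ≤ G x - G y)]
      nlinarith [abs_nonneg (x - y), mul_pos hσ1 hε]
    · have h1 := key y x h
      have h2 : y - x ≤ |x - y| := by rw [abs_sub_comm]; exact le_abs_self _
      rw [abs_of_nonpos (by linarith : G x - G y ≤ 0)]
      nlinarith [abs_nonneg (x - y), mul_pos hσ1 hε]
  -- main estimate
  have hdiv : ∀ t : ℝ, f t / (ε * σ t) = (f t / σ t) / ε := fun t => by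
    rw [div_div, mul_comm]
  have h1 : |f (G x) / (ε * σ (G x)) - f (G y) / (ε * σ (G y))| ≤ (L / ε) * |G x - G y| := by
    rw [hdiv, hdiv, div_sub_div_same, abs_div, abs_of_pos hε, div_mul_eq_mul_div]
    gcongr
    exact hfσ _ _
  have h2 : |ε * σ' (G x) / 2 - ε * σ' (G y) / 2| ≤ (K * ε / 2) * |G x - G y| := by
    have he : ε * σ' (G x) / 2 - ε * σ' (G y) / 2 = (ε / 2) * (σ' (G x) - σ' (G y)) := by ring
    rw [he, abs_mul, abs_of_pos (by positivity : (0:ℝ) < ε / 2)]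
    nlinarith [hσ'l (G x) (G y), abs_nonneg (σ' (G x) - σ' (G y))]
  have htri : |(f (G x) / (ε * σ (G x)) - ε * σ' (G x) / 2) -
      (f (G y) / (ε * σ (G y)) - ε * σ' (G y) / 2)| ≤
      |f (G x) / (ε * σ (G x)) - f (G y) / (ε * σ (G y))| +
      |ε * σ' (G x) / 2 - ε * σ' (G y) / 2| := by
    have : (f (G x) / (ε * σ (G x)) - ε * σ' (G x) / 2) -
        (f (G y) / (ε * σ (G y)) - ε * σ' (G y) / 2) =
        (f (G x) / (ε * σ (G x)) - f (G y) / (ε * σ (G y))) -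
        (ε * σ' (G x) / 2 - ε * σ' (G y) / 2) := by ring
    rw [this]
    exact abs_sub _ _
  have hcoef : 0 ≤ L / ε + K * ε / 2 := by positivity
  calc |(f (G x) / (ε * σ (G x)) - ε * σ' (G x) / 2) -
      (f (G y) / (ε * σ (G y)) - ε * σ' (G y) / 2)|
      ≤ (L / ε) * |G x - G y| + (K * ε / 2) * |G x - G y| := htri.trans (by linarith)
    _ = (L / ε + K * ε / 2) * |G x - G y| := by ring
    _ ≤ (L / ε + K * ε / 2) * (σ₁ * ε * |x - y|) := by
        exact mul_le_mul_of_nonneg_left hGlip hcoef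
    _ = (L / ε + K * ε / 2) * (σ₁ * ε) * |x - y| := by ring
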